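/- The vector recurrence v(k) = A·v(k-1), where A is the 3×3 integer matrix [[2,1,-2],[1,0,0],[0,1,0]] and v(3) = (14,6,2), satisfies: the first coordinate of v(k) equals 2^(k+1) - 2 for all k ≥ 3. -/

import Mathlib

/-! The characteristic polynomial of `A` is `(x - 2)(x - 1)(x + 1)`, and `(4, 2, 1)`, `(1, 1, 1)` are
eigenvectors for the eigenvalues `2` and `1`. Since `v 3 = 4 • (4, 2, 1) - 2 • (1, 1, 1)`, the orbit is
`v (n + 3) = 2 ^ (n + 2) • (4, 2, 1) - 2 • (1, 1, 1)`, whose first coordinate is `2 ^ (n + 4) - 2`. -/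

open Matrix

lemma mulVec_four_two_one :
    !![(2 : ℤ), 1, -2; 1, 0, 0; 0, 1, 0] *ᵥ ![4, 2, 1] = (2 : ℤ) • ![4, 2, 1] := by
  ext i; fin_cases i <;> rfl

lemma mulVec_one_one_one :
    !![(2 : ℤ), 1, -2; 1, 0, 0; 0, 1, 0] *ᵥ ![1, 1, 1] = ![1, 1, 1] := by
  ext i; fin_cases i <;> rfl

lemma orbit_eq_of_mulVec_recurrence (v : ℕ → Fin 3 → ℤ) (hv3 : v 3 = ![14, 6, 2])
    (hrec : ∀ k, 4 ≤ k → v k = !![2, 1, -2; 1, 0, 0; 0, 1, 0] *ᵥ v (k - 1)) (n : ℕ) :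
    v (n + 3) = (2 ^ (n + 2) : ℤ) • ![4, 2, 1] - (2 : ℤ) • ![1, 1, 1] := by
  induction n with
  | zero => rw [hv3]; ext i; fin_cases i <;> rfl
  | succ n ih =>
    rw [hrec (n + 1 + 3) (by omega), Nat.add_sub_assoc (by omega), ih, mulVec_sub, mulVec_smul,
      mulVec_smul, mulVec_four_two_one, mulVec_one_one_one, smul_smul, ← pow_succ]

theorem stmt_13 (A : Matrix (Fin 3) (Fin 3) ℤ)
    (hA : A = !![2, 1, -2; 1, 0, 0; 0, 1, 0])
    (v : ℕ → Fin 3 → ℤ)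
    (hv3 : v 3 = ![14, 6, 2])
    (hrec : ∀ k, 4 ≤ k → v k = A.mulVec (v (k - 1))) :
    ∀ k, 3 ≤ k → v k 0 = 2 ^ (k + 1) - 2 := by
  subst hA
  intro k hk
  obtain ⟨n, rfl⟩ := Nat.exists_eq_add_of_le' hk
  rw [orbit_eq_of_mulVec_recurrence v hv3 hrec n]
  simp only [Pi.sub_apply, Pi.smul_apply, Matrix.cons_val_zero, smul_eq_mul]
  ring
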